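/- Let A_1, …, A_ℓ ∈ ℝ^{m×n}, b_1, …, b_ℓ ∈ ℝ^n, c_1, …, c_ℓ ∈ ℝ, let ε > 0, ω > 0 and κ ≥ 0. Let y* ∈ ℝ^n with Euclidean norm ‖y*‖ ≤ κ, and let x* ∈ ℤ^m with x* ≥ 0 componentwise satisfy (x*)^⊤A_i y* + b_i^⊤ y* ≤ c_i − ε for all i = 1, …, ℓ. Suppose u ∈ ℤ^m \ {0} is such that width_u(P(y*)) < ω. Then |u^⊤ x*| ≤ ω·(1 + ε^{−1}·max_{1 ≤ i ≤ ℓ}(|c_i| + ‖b_i‖·κ)). -/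

import Mathlib

open scoped BigOperators

/-!
The slack `ε` lets `x*` be stretched inside `P(y*)`: with `M = maxᵢ (|cᵢ| + ‖bᵢ‖ κ)` each bilinear
term `(x*)ᵀ Aᵢ y*` is at most `M - ε`, so `(1 + t) x*` with `t = ε / (ε + M)` still satisfies every
constraint. Since `x*` and `(1 + t) x*` both lie in `P(y*)`, the width bound applied in both
orders gives `t |uᵀ x*| < ω`, i.e. `|uᵀ x*| < ω (ε + M) / ε`.
-/

/-- The polyhedron `P(y) = { x ∈ ℝ^m : x ≥ 0, xᵀ Aᵢ y + bᵢᵀ y ≤ cᵢ (i = 1..ℓ) }`. -/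
def Pset {l m n : ℕ} (A : Fin l → Matrix (Fin m) (Fin n) ℝ)
    (b : Fin l → EuclideanSpace ℝ (Fin n)) (c : Fin l → ℝ)
    (y : EuclideanSpace ℝ (Fin n)) : Set (EuclideanSpace ℝ (Fin m)) :=
  {x | (∀ j, 0 ≤ x j) ∧
    ∀ i, (∑ j, ∑ k, x j * A i j k * y k) + (∑ k, b i k * y k) ≤ c i}

/-- The width of a set `K ⊆ ℝ^m` with respect to an integer direction `u`:
`width_u(K) = sup { uᵀ(x - y) : x, y ∈ K }`, valued in the extended reals. -/
noncomputable def intWidth {m : ℕ} (u : Fin m → ℤ) (K : Set (EuclideanSpace ℝ (Fin m))) :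
    EReal :=
  ⨆ x ∈ K, ⨆ y ∈ K, ((∑ i, (u i : ℝ) * (x i - y i) : ℝ) : EReal)

section Width

variable {m : ℕ} {u : Fin m → ℤ} {K : Set (EuclideanSpace ℝ (Fin m))}

theorem le_intWidth {x y : EuclideanSpace ℝ (Fin m)} (hx : x ∈ K) (hy : y ∈ K) :
    ((∑ i, (u i : ℝ) * (x i - y i) : ℝ) : EReal) ≤ intWidth u K :=
  le_iSup₂_of_le x hx <| le_iSup₂_of_le (f := fun y (_ : y ∈ K) =>
    ((∑ i, (u i : ℝ) * (x i - y i) : ℝ) : EReal)) y hy le_rfl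

theorem sum_mul_sub_lt_of_intWidth_lt {ω : ℝ} (hw : intWidth u K < ω)
    {x y : EuclideanSpace ℝ (Fin m)} (hx : x ∈ K) (hy : y ∈ K) :
    ∑ i, (u i : ℝ) * (x i - y i) < ω :=
  EReal.coe_lt_coe_iff.mp ((le_intWidth hx hy).trans_lt hw)

theorem abs_mul_sum_lt_of_smul_mem {ω t : ℝ} (hw : intWidth u K < ω)
    {x : EuclideanSpace ℝ (Fin m)} (hx : x ∈ K) (htx : (1 + t) • x ∈ K) :
    |t * ∑ i, (u i : ℝ) * x i| < ω := by
  have hdiff : ∀ y z : EuclideanSpace ℝ (Fin m),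
      ∑ i, (u i : ℝ) * (y i - z i) = ∑ i, (u i : ℝ) * y i - ∑ i, (u i : ℝ) * z i := by
    intro y z
    simp only [mul_sub, Finset.sum_sub_distrib]
  have hscale : ∑ i, (u i : ℝ) * ((1 + t) • x) i = (1 + t) * ∑ i, (u i : ℝ) * x i := by
    simp only [PiLp.smul_apply, smul_eq_mul, Finset.mul_sum]
    exact Finset.sum_congr rfl fun i _ => by ring
  have hup := sum_mul_sub_lt_of_intWidth_lt hw htx hx
  have hdown := sum_mul_sub_lt_of_intWidth_lt hw hx htx
  rw [hdiff, hscale] at hup hdown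
  exact abs_lt.mpr ⟨by linarith, by linarith⟩

end Width

theorem abs_sum_mul_le_norm_mul_norm {n : ℕ} (v w : EuclideanSpace ℝ (Fin n)) :
    |∑ k, v k * w k| ≤ ‖v‖ * ‖w‖ := by
  have h : ∑ k, v k * w k = inner ℝ v w := by simp [PiLp.inner_apply, mul_comm]
  rw [h]
  exact abs_real_inner_le_norm v w

section Polyhedron

variable {l m n : ℕ} {A : Fin l → Matrix (Fin m) (Fin n) ℝ}
  {b : Fin l → EuclideanSpace ℝ (Fin n)} {c : Fin l → ℝ} {y : EuclideanSpace ℝ (Fin n)}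
  {x : EuclideanSpace ℝ (Fin m)} {ε : ℝ}

theorem mem_Pset_of_slack (hε : 0 ≤ ε) (hx : ∀ j, 0 ≤ x j)
    (hslack : ∀ i, (∑ j, ∑ k, x j * A i j k * y k) + (∑ k, b i k * y k) ≤ c i - ε) :
    x ∈ Pset A b c y :=
  ⟨hx, fun i => (hslack i).trans (by linarith)⟩

theorem smul_mem_Pset_of_slack {t : ℝ} (ht : 0 ≤ t) (hx : ∀ j, 0 ≤ x j)
    (hslack : ∀ i, (∑ j, ∑ k, x j * A i j k * y k) + (∑ k, b i k * y k) ≤ c i - ε)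
    (hgrowth : ∀ i, t * ∑ j, ∑ k, x j * A i j k * y k ≤ ε) :
    (1 + t) • x ∈ Pset A b c y := by
  refine ⟨fun j => mul_nonneg (by linarith) (hx j), fun i => ?_⟩
  have hscale : ∑ j, ∑ k, ((1 + t) • x) j * A i j k * y k
      = (1 + t) * ∑ j, ∑ k, x j * A i j k * y k := by
    simp only [PiLp.smul_apply, smul_eq_mul, Finset.mul_sum, mul_assoc]
  rw [hscale]
  linarith [hslack i, hgrowth i]

theorem bilinear_le_of_slack {κ : ℝ} (hy : ‖y‖ ≤ κ)
    (hslack : ∀ i, (∑ j, ∑ k, x j * A i j k * y k) + (∑ k, b i k * y k) ≤ c i - ε) (i : Fin l) :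
    ∑ j, ∑ k, x j * A i j k * y k ≤ |c i| + ‖b i‖ * κ - ε := by
  have hb : -(∑ k, b i k * y k) ≤ ‖b i‖ * κ := calc
    -(∑ k, b i k * y k) ≤ |∑ k, b i k * y k| := neg_le_abs _
    _ ≤ ‖b i‖ * ‖y‖ := abs_sum_mul_le_norm_mul_norm (b i) y
    _ ≤ ‖b i‖ * κ := mul_le_mul_of_nonneg_left hy (norm_nonneg _)
  linarith [hslack i, le_abs_self (c i)]

end Polyhedron

theorem stmt6_general {l m n : ℕ} (A : Fin l → Matrix (Fin m) (Fin n) ℝ)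
    (b : Fin l → EuclideanSpace ℝ (Fin n)) (c : Fin l → ℝ)
    (ε : ℝ) (hε : 0 < ε) (ω : ℝ) (κ : ℝ)
    (ystar : EuclideanSpace ℝ (Fin n)) (hy : ‖ystar‖ ≤ κ)
    (xstar : Fin m → ℤ) (hx0 : ∀ j, 0 ≤ xstar j)
    (hslack : ∀ i, (∑ j, ∑ k, (xstar j : ℝ) * A i j k * ystar k)
      + (∑ k, b i k * ystar k) ≤ c i - ε)
    (u : Fin m → ℤ)
    (hwidth : intWidth u (Pset A b c ystar) < (ω : EReal)) :
    |∑ j, (u j : ℝ) * (xstar j : ℝ)| ≤ ω * (1 + ε⁻¹ * ⨆ i, (|c i| + ‖b i‖ * κ)) := by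
  set M := ⨆ i, (|c i| + ‖b i‖ * κ)
  have hκ : 0 ≤ κ := (norm_nonneg _).trans hy
  have hM : 0 ≤ M := Real.iSup_nonneg fun i => by positivity
  have hle_M : ∀ i, |c i| + ‖b i‖ * κ ≤ M := le_ciSup (Set.finite_range _).bddAbove
  let x : EuclideanSpace ℝ (Fin m) := WithLp.toLp 2 fun j => (xstar j : ℝ)
  have hx : ∀ j, 0 ≤ x j := fun j => Int.cast_nonneg (hx0 j)
  have hslack_x : ∀ i, (∑ j, ∑ k, x j * A i j k * ystar k) + (∑ k, b i k * ystar k) ≤ c i - ε :=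
    hslack
  have ht : 0 < ε / (ε + M) := by positivity
  have hgrowth : ∀ i, ε / (ε + M) * ∑ j, ∑ k, x j * A i j k * ystar k ≤ ε := fun i => calc
    ε / (ε + M) * ∑ j, ∑ k, x j * A i j k * ystar k ≤ ε / (ε + M) * (ε + M) :=
      mul_le_mul_of_nonneg_left
        (by linarith [bilinear_le_of_slack hy hslack_x i, hle_M i]) ht.le
    _ = ε := div_mul_cancel₀ ε (by positivity)
  have hbound := abs_mul_sum_lt_of_smul_mem hwidth (mem_Pset_of_slack hε.le hx hslack_x)
    (smul_mem_Pset_of_slack ht.le hx hslack_x hgrowth)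
  rw [abs_mul, abs_of_pos ht] at hbound
  calc |∑ j, (u j : ℝ) * (xstar j : ℝ)| ≤ ω / (ε / (ε + M)) := (le_div_iff₀' ht).mpr hbound.le
    _ = ω * (1 + ε⁻¹ * M) := by field_simp

/-- Branch-and-bound step: if `y*` has norm at most `κ`, `x* ∈ ℤ^m` is nonnegative and
satisfies all bilinear constraints with slack `ε`, and `u` is a nonzero integer
direction in which `P(y*)` has width less than `ω`, then
`|uᵀ x*| ≤ ω (1 + ε⁻¹ maxᵢ (|cᵢ| + ‖bᵢ‖ κ))`. -/
theorem stmt6 {l m n : ℕ} (hl : 0 < l) (A : Fin l → Matrix (Fin m) (Fin n) ℝ)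
    (b : Fin l → EuclideanSpace ℝ (Fin n)) (c : Fin l → ℝ)
    (ε : ℝ) (hε : 0 < ε) (ω : ℝ) (hω : 0 < ω) (κ : ℝ) (hκ : 0 ≤ κ)
    (ystar : EuclideanSpace ℝ (Fin n)) (hy : ‖ystar‖ ≤ κ)
    (xstar : Fin m → ℤ) (hx0 : ∀ j, 0 ≤ xstar j)
    (hslack : ∀ i, (∑ j, ∑ k, (xstar j : ℝ) * A i j k * ystar k)
      + (∑ k, b i k * ystar k) ≤ c i - ε)
    (u : Fin m → ℤ) (hu : u ≠ 0)
    (hwidth : intWidth u (Pset A b c ystar) < (ω : EReal)) :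
    |∑ j, (u j : ℝ) * (xstar j : ℝ)| ≤ ω * (1 + ε⁻¹ * ⨆ i, (|c i| + ‖b i‖ * κ)) :=
  stmt6_general A b c ε hε ω κ ystar hy xstar hx0 hslack u hwidth
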